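/- Let H be a vector space with bilinear form ⟨·,·⟩ and S(x) : H⊗H → H⊗H⊗ℂ[[x]] a linear map, and let W be a vacuum (H,S)-module generated by a vacuum-like vector e. Define W[k] = span{a⁽¹⁾(−m₁)⋯a⁽ʳ⁾(−m_r)e : r ≥ 0, a⁽ⁱ⁾ ∈ H, mᵢ ≥ 1, m₁+⋯+m_r ≤ k} for k ≥ 0 and W[k] = 0 for k < 0. Then for all a ∈ H, m,k ∈ ℤ: a(m)W[k] ⊆ W[k−m], and a(m)W[k] ⊆ W[k−m−1] whenever m ≥ 0. -/

import Mathlib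

noncomputable section

open scoped TensorProduct

variable {H W : Type} [AddCommGroup H] [Module ℂ H] [AddCommGroup W] [Module ℂ W]

/-- Given an action `act m a` of the generators `a(m) = a ⊗ tᵐ` of the tensor algebra
`T(H ⊗ ℂ[t,t⁻¹])` on `W`, the bilinear map `b' ⊗ a' ↦ b'(p) ∘ a'(q)` on `H ⊗ H`. -/
def pairAct (act : ℤ → H →ₗ[ℂ] W →ₗ[ℂ] W) (p q : ℤ) :
    H ⊗[ℂ] H →ₗ[ℂ] (W →ₗ[ℂ] W) :=
  TensorProduct.lift
    (LinearMap.mk₂ ℂ (fun b' a' => (act p b') ∘ₗ (act q a'))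
      (fun b₁ b₂ a' => by simp [map_add, LinearMap.add_comp])
      (fun c b' a' => by simp [map_smul, LinearMap.smul_comp])
      (fun b' a₁ a₂ => by simp [map_add, LinearMap.comp_add])
      (fun c b' a' => by simp [map_smul, LinearMap.comp_smul]))

/-- The iterated product `a⁽¹⁾(m₁) ⋯ a⁽ʳ⁾(m_r) w`. -/
def actSeq (act : ℤ → H →ₗ[ℂ] W →ₗ[ℂ] W) :
    (r : ℕ) → (Fin r → H) → (Fin r → ℤ) → W → W
  | 0, _, _, w => w
  | r + 1, a, m, w => act (m 0) (a 0) (actSeq act r (Fin.tail a) (Fin.tail m) w)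

/-- The filtration `W[k] = span{a⁽¹⁾(-m₁) ⋯ a⁽ʳ⁾(-m_r)e : r ≥ 0, mᵢ ≥ 1, ∑ mᵢ ≤ k}`
of a vacuum `(H,S)`-module generated by the vacuum-like vector `e`
(so `W[k] = 0` for `k < 0`). -/
def Wfil (act : ℤ → H →ₗ[ℂ] W →ₗ[ℂ] W) (e : W) (k : ℤ) : Submodule ℂ W :=
  Submodule.span ℂ
    {w : W | ∃ (r : ℕ) (a : Fin r → H) (m : Fin r → ℤ),
      (∀ i, 1 ≤ m i) ∧ (∑ i, m i) ≤ k ∧ w = actSeq act r a (fun i => -(m i)) e}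

/-!
Induct on the length of monomials. For `m ≥ 0`, move `a(m)` past the first factor `b(-n)` of a
monomial `b(-n) w'` using the `(H,S)`-relation: the `δ`-term is `⟨a,b⟩ w'` with `m = n - 1`, and
every other term is `b'(p) a'(q) w'` with `q ≥ 0` and `p + q ≥ m - n`. By induction `a'(q) w'` lies in
a lower filtration piece with no longer monomials, and applying `b'(p)` adds at most one factor,
which is why the filtration has to be refined by monomial length.
-/

def WfilLen (act : ℤ → H →ₗ[ℂ] W →ₗ[ℂ] W) (e : W) (k : ℤ) (r : ℕ) : Submodule ℂ W :=
  Submodule.span ℂ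
    {w : W | ∃ s ≤ r, ∃ (a : Fin s → H) (m : Fin s → ℤ),
      (∀ i, 1 ≤ m i) ∧ (∑ i, m i) ≤ k ∧ w = actSeq act s a (fun i => -(m i)) e}

theorem LinearMap.apply_mem_of_mem_span {R M N : Type*} [Semiring R] [AddCommMonoid M]
    [AddCommMonoid N] [Module R M] [Module R N] (f : M →ₗ[R] N) {s : Set M} {T : Submodule R N}
    (h : ∀ x ∈ s, f x ∈ T) {w : M} (hw : w ∈ Submodule.span R s) : f w ∈ T :=
  (LinearMap.map_span_le f s T).mpr h (Submodule.mem_map_of_mem hw)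

/-- The coefficient of `x₁^{-m-1} x₂^{-n-1}` in the defining relation of an `(H,S)`-module,
where `S(x) = ∑ S_r x^r` and `ι_{x₂,x₁}(x₂ - x₁)^r = ∑_j (-1)^j (r choose j) x₂^{r-j} x₁^j`. -/
def SatisfiesHSRelation (Bf : H →ₗ[ℂ] H →ₗ[ℂ] ℂ) (S : ℕ → (H ⊗[ℂ] H →ₗ[ℂ] H ⊗[ℂ] H))
    (act : ℤ → H →ₗ[ℂ] W →ₗ[ℂ] W) : Prop :=
  ∀ (a b : H) (m n : ℤ) (w : W),
    act m a (act n b w) -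
      (∑ᶠ rs : ℕ × ℕ,
        ((((-1 : ℤ) ^ rs.2 * (rs.1.choose rs.2 : ℤ)) : ℤ) : ℂ) •
          (pairAct act (n + rs.1 - rs.2) (m + rs.2)) (S rs.1 (b ⊗ₜ[ℂ] a)) w) =
    (if m + n + 1 = 0 then (Bf a b) • w else 0)

def IsVacuumLike (act : ℤ → H →ₗ[ℂ] W →ₗ[ℂ] W) (e : W) : Prop :=
  ∀ (a : H) (m : ℤ), 0 ≤ m → act m a e = 0

section Filtration

variable {act : ℤ → H →ₗ[ℂ] W →ₗ[ℂ] W} {e : W}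

theorem Wfil_mono : Monotone (Wfil act e) := by
  intro k k' hk
  apply Submodule.span_mono
  rintro w ⟨r, a, m, hm, hsum, rfl⟩
  exact ⟨r, a, m, hm, hsum.trans hk, rfl⟩

theorem WfilLen_mono {k k' : ℤ} {r r' : ℕ} (hk : k ≤ k') (hr : r ≤ r') :
    WfilLen act e k r ≤ WfilLen act e k' r' := by
  apply Submodule.span_mono
  rintro w ⟨s, hs, a, m, hm, hsum, rfl⟩
  exact ⟨s, hs.trans hr, a, m, hm, hsum.trans hk, rfl⟩

theorem actSeq_mem_WfilLen {k : ℤ} {s : ℕ} (a : Fin s → H) (m : Fin s → ℤ)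
    (hm : ∀ i, 1 ≤ m i) (hsum : ∑ i, m i ≤ k) :
    actSeq act s a (fun i => -(m i)) e ∈ WfilLen act e k s :=
  Submodule.subset_span ⟨s, le_rfl, a, m, hm, hsum, rfl⟩

theorem Wfil_eq_iSup_WfilLen (k : ℤ) : Wfil act e k = ⨆ r, WfilLen act e k r := by
  apply le_antisymm
  · rw [Wfil, Submodule.span_le]
    rintro w ⟨s, a, m, hm, hsum, rfl⟩
    exact Submodule.mem_iSup_of_mem s (actSeq_mem_WfilLen a m hm hsum)
  · refine iSup_le fun r => Submodule.span_mono ?_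
    rintro w ⟨s, -, a, m, hm, hsum, rfl⟩
    exact ⟨s, a, m, hm, hsum, rfl⟩

theorem act_mem_WfilLen_succ_of_neg {k m : ℤ} {r : ℕ} (c : H) (hm : m < 0) {w : W}
    (hw : w ∈ WfilLen act e k r) : act m c w ∈ WfilLen act e (k - m) (r + 1) := by
  refine (act m c).apply_mem_of_mem_span ?_ hw
  rintro w ⟨s, hs, a, ms, hms, hsum, rfl⟩
  have hcons : act m c (actSeq act s a (fun i => -(ms i)) e) =
      actSeq act (s + 1) (Fin.cons c a)
        (fun i => -((Fin.cons (-m) ms : Fin (s + 1) → ℤ) i)) e := by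
    simp only [actSeq, Fin.cons_zero, neg_neg]
    rfl
  rw [hcons]
  refine WfilLen_mono le_rfl (by omega) (actSeq_mem_WfilLen _ _ ?_ ?_)
  · exact Fin.cases (by simp only [Fin.cons_zero]; omega) (fun j => by simpa using hms j)
  · rw [Fin.sum_cons]; omega

theorem WfilLen_le_Wfil (k : ℤ) (r : ℕ) : WfilLen act e k r ≤ Wfil act e k := by
  rw [Wfil_eq_iSup_WfilLen]
  exact le_iSup _ r

theorem apply_mem_of_mem_Wfil (f : W →ₗ[ℂ] W) {k : ℤ} {T : Submodule ℂ W}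
    (h : ∀ r, ∀ w ∈ WfilLen act e k r, f w ∈ T) {w : W} (hw : w ∈ Wfil act e k) : f w ∈ T := by
  rw [Wfil_eq_iSup_WfilLen] at hw
  exact (iSup_le fun r => (h r · ·) : ⨆ r, WfilLen act e k r ≤ T.comap f) hw

variable (act e) in
def LowersWfilLen (r : ℕ) : Prop :=
  ∀ (c : H) (m k : ℤ) (w : W), 0 ≤ m → w ∈ WfilLen act e k r →
    act m c w ∈ WfilLen act e (k - m - 1) r

theorem act_mem_WfilLen_succ {r : ℕ} (hr : LowersWfilLen act e r) (c : H) (m : ℤ) {k : ℤ}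
    {w : W} (hw : w ∈ WfilLen act e k r) : act m c w ∈ WfilLen act e (k - m) (r + 1) := by
  rcases lt_or_ge m 0 with hm | hm
  · exact act_mem_WfilLen_succ_of_neg c hm hw
  · exact WfilLen_mono (by omega) r.le_succ (hr c m k w hm hw)

theorem pairAct_mem_WfilLen {r : ℕ} (hr : LowersWfilLen act e r) {p q k : ℤ} (hq : 0 ≤ q)
    {w : W} (hw : w ∈ WfilLen act e k r) (t : H ⊗[ℂ] H) :
    pairAct act p q t w ∈ WfilLen act e (k - q - 1 - p) (r + 1) := by
  induction t using TensorProduct.induction_on with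
  | zero => simp
  | tmul b a => exact act_mem_WfilLen_succ hr b p (hr a q k w hq hw)
  | add x y hx hy =>
    rw [map_add, LinearMap.add_apply]
    exact add_mem hx hy

theorem act_act_mem_WfilLen_of_nonneg {Bf : H →ₗ[ℂ] H →ₗ[ℂ] ℂ}
    {S : ℕ → (H ⊗[ℂ] H →ₗ[ℂ] H ⊗[ℂ] H)} (hrel : SatisfiesHSRelation Bf S act) {r : ℕ}
    (hr : LowersWfilLen act e r) (c b : H) {m : ℤ} (hm : 0 ≤ m) (p : ℤ) {k : ℤ} {w : W}
    (hw : w ∈ WfilLen act e k r) :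
    act m c (act p b w) ∈ WfilLen act e (k - p - m - 1) (r + 1) := by
  rw [sub_eq_iff_eq_add.mp (hrel c b m p w)]
  refine add_mem ?_ (finsum_induction _ (zero_mem _) (fun _ _ => add_mem) fun rs =>
    Submodule.smul_mem _ _ ?_)
  · split_ifs
    · exact Submodule.smul_mem _ _ (WfilLen_mono (by omega) r.le_succ hw)
    · exact zero_mem _
  · have hq : 0 ≤ m + rs.2 := by positivity
    have hrs : (0 : ℤ) ≤ rs.1 := by positivity
    exact WfilLen_mono (by omega) le_rfl
      (pairAct_mem_WfilLen hr (p := p + rs.1 - rs.2) hq hw _)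

theorem lowersWfilLen {Bf : H →ₗ[ℂ] H →ₗ[ℂ] ℂ} {S : ℕ → (H ⊗[ℂ] H →ₗ[ℂ] H ⊗[ℂ] H)}
    (hrel : SatisfiesHSRelation Bf S act) (hvac : IsVacuumLike act e)
    (r : ℕ) : LowersWfilLen act e r := by
  induction r using Nat.strong_induction_on with
  | _ r ih =>
  intro c m k w hm hw
  refine (act m c).apply_mem_of_mem_span ?_ hw
  rintro _ ⟨s, hs, a, ms, hms, hsum, rfl⟩
  cases s with
  | zero => simp [actSeq, hvac c m hm]
  | succ s =>
    rw [Fin.sum_univ_succ] at hsum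
    have htail := actSeq_mem_WfilLen (act := act) (e := e) (k := k - ms 0) (Fin.tail a)
      (Fin.tail ms) (fun i => hms i.succ) (by simp only [Fin.tail]; omega)
    exact WfilLen_mono (by omega) hs
      (act_act_mem_WfilLen_of_nonneg hrel (ih s (by omega)) c (a 0) hm (-ms 0) htail)

theorem act_mem_Wfil_sub_one_of_nonneg {Bf : H →ₗ[ℂ] H →ₗ[ℂ] ℂ}
    {S : ℕ → (H ⊗[ℂ] H →ₗ[ℂ] H ⊗[ℂ] H)} (hrel : SatisfiesHSRelation Bf S act)
    (hvac : IsVacuumLike act e) (c : H) {m k : ℤ} (hm : 0 ≤ m) {w : W}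
    (hw : w ∈ Wfil act e k) : act m c w ∈ Wfil act e (k - m - 1) :=
  apply_mem_of_mem_Wfil (act m c) (fun r _ hw => WfilLen_le_Wfil _ r
    (lowersWfilLen hrel hvac r c m k _ hm hw)) hw

theorem act_mem_Wfil_sub {Bf : H →ₗ[ℂ] H →ₗ[ℂ] ℂ} {S : ℕ → (H ⊗[ℂ] H →ₗ[ℂ] H ⊗[ℂ] H)}
    (hrel : SatisfiesHSRelation Bf S act) (hvac : IsVacuumLike act e)
    (c : H) (m : ℤ) {k : ℤ} {w : W} (hw : w ∈ Wfil act e k) : act m c w ∈ Wfil act e (k - m) :=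
  apply_mem_of_mem_Wfil (act m c) (fun r _ hw => WfilLen_le_Wfil _ (r + 1)
    (act_mem_WfilLen_succ (lowersWfilLen hrel hvac r) c m hw)) hw

theorem actSeq_mem_iSup_Wfil {Bf : H →ₗ[ℂ] H →ₗ[ℂ] ℂ} {S : ℕ → (H ⊗[ℂ] H →ₗ[ℂ] H ⊗[ℂ] H)}
    (hrel : SatisfiesHSRelation Bf S act) (hvac : IsVacuumLike act e)
    (r : ℕ) (a : Fin r → H) (m : Fin r → ℤ) : actSeq act r a m e ∈ ⨆ k, Wfil act e k := by
  induction r with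
  | zero =>
    exact Submodule.mem_iSup_of_mem 0
      (Submodule.subset_span ⟨0, Fin.elim0, Fin.elim0, (·.elim0), by simp, rfl⟩)
  | succ r ih =>
    obtain ⟨k, hk⟩ :=
      (Submodule.mem_iSup_of_directed _ Wfil_mono.directed_le).mp (ih (Fin.tail a) (Fin.tail m))
    exact Submodule.mem_iSup_of_mem _ (act_mem_Wfil_sub hrel hvac (a 0) (m 0) hk)

end Filtration

theorem stmt13_general
    (Bf : H →ₗ[ℂ] H →ₗ[ℂ] ℂ)
    (S : ℕ → (H ⊗[ℂ] H →ₗ[ℂ] H ⊗[ℂ] H))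
    (act : ℤ → H →ₗ[ℂ] W →ₗ[ℂ] W)
    (hrel : ∀ (a b : H) (m n : ℤ) (w : W),
      act m a (act n b w) -
        (∑ᶠ rs : ℕ × ℕ,
          ((((-1 : ℤ) ^ rs.2 * (rs.1.choose rs.2 : ℤ)) : ℤ) : ℂ) •
            (pairAct act (n + rs.1 - rs.2) (m + rs.2)) (S rs.1 (b ⊗ₜ[ℂ] a)) w) =
      (if m + n + 1 = 0 then (Bf a b) • w else 0))
    (e : W)
    (hvaclike : ∀ (a : H) (m : ℤ), 0 ≤ m → act m a e = 0)
    (hgen : (⊤ : Submodule ℂ W) = Submodule.span ℂ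
      {w : W | ∃ (r : ℕ) (a : Fin r → H) (m : Fin r → ℤ), w = actSeq act r a m e}) :
    Monotone (Wfil act e) ∧ (⨆ k, Wfil act e k) = ⊤ ∧
    ∀ (a : H) (m k : ℤ) (w : W), w ∈ Wfil act e k →
      act m a w ∈ Wfil act e (k - m) ∧
      (0 ≤ m → act m a w ∈ Wfil act e (k - m - 1)) := by
  refine ⟨Wfil_mono, ?_, fun a m k w hw =>
    ⟨act_mem_Wfil_sub hrel hvaclike a m hw,
      fun hm => act_mem_Wfil_sub_one_of_nonneg hrel hvaclike a hm hw⟩⟩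
  refine top_unique (hgen ▸ Submodule.span_le.mpr ?_)
  rintro _ ⟨r, a, m, rfl⟩
  exact actSeq_mem_iSup_Wfil hrel hvaclike r a m

/-- Let `H` carry a bilinear form `⟨·,·⟩` and a linear map
`S(x) = ∑_{r≥0} S_r x^r : H ⊗ H → H ⊗ H ⊗ ℂ[[x]]`, and let `W` be a vacuum
`(H,S)`-module generated by a vacuum-like vector `e`: each `a(x) = ∑ a(m)x^{-m-1}` is
truncated, the defining relation
`a(x₁)b(x₂)w - ∑ᵢ ι_{x₂,x₁}(fᵢ(x₂-x₁)) b⁽ⁱ⁾(x₂)a⁽ⁱ⁾(x₁)w = x₂⁻¹δ(x₁/x₂)⟨a,b⟩w`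
(with `S(x)(b ⊗ a) = ∑ᵢ b⁽ⁱ⁾ ⊗ a⁽ⁱ⁾ ⊗ fᵢ(x)`) holds, written coefficientwise, and
`a(m)e = 0` for `m ≥ 0`, with `W` generated from `e` by the operators `a(m)`.
Then the `W[k]` form an increasing exhaustive filtration of `W` with
`a(m) W[k] ⊆ W[k-m]` for all `m ∈ ℤ`, and `a(m) W[k] ⊆ W[k-m-1]` for `m ≥ 0`. -/
theorem stmt13
    (Bf : H →ₗ[ℂ] H →ₗ[ℂ] ℂ)
    (S : ℕ → (H ⊗[ℂ] H →ₗ[ℂ] H ⊗[ℂ] H))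
    (act : ℤ → H →ₗ[ℂ] W →ₗ[ℂ] W)
    (htrunc : ∀ (a : H) (w : W), ∃ N : ℤ, ∀ m : ℤ, N ≤ m → act m a w = 0)
    (hrel : ∀ (a b : H) (m n : ℤ) (w : W),
      act m a (act n b w) -
        (∑ᶠ rs : ℕ × ℕ,
          ((((-1 : ℤ) ^ rs.2 * (rs.1.choose rs.2 : ℤ)) : ℤ) : ℂ) •
            (pairAct act (n + rs.1 - rs.2) (m + rs.2)) (S rs.1 (b ⊗ₜ[ℂ] a)) w) =
      (if m + n + 1 = 0 then (Bf a b) • w else 0))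
    (e : W)
    (hvaclike : ∀ (a : H) (m : ℤ), 0 ≤ m → act m a e = 0)
    (hgen : (⊤ : Submodule ℂ W) = Submodule.span ℂ
      {w : W | ∃ (r : ℕ) (a : Fin r → H) (m : Fin r → ℤ), w = actSeq act r a m e}) :
    Monotone (Wfil act e) ∧ (⨆ k, Wfil act e k) = ⊤ ∧
    ∀ (a : H) (m k : ℤ) (w : W), w ∈ Wfil act e k →
      act m a w ∈ Wfil act e (k - m) ∧
      (0 ≤ m → act m a w ∈ Wfil act e (k - m - 1)) :=
  stmt13_general Bf S act hrel e hvaclike hgen
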